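/- There exists an absolute constant C > 0 with the following property. Let n ≥ 1, let t_0 < t_1 < … < t_n be real numbers, let x_0, …, x_n ∈ ℝ, and set τ_i = t_{i+1} − t_i. Let X : [t_0, t_n] → ℝ be twice continuously differentiable, restrict to a polynomial of degree at most 3 on each interval [t_i, t_{i+1}], satisfy X(t_i) = x_i for every i, and satisfy X''(t_0) = X''(t_n) = 0. Then sup_{[t_0,t_n]} |X| + sup_{[t_0,t_n]} |X'| + sup_{[t_0,t_n]} |X''| ≤ C · (max_i τ_i) · (max_i |x_i|) · (min_i τ_i)^{-2} · (max_i τ_i + (min_i τ_i)^{-1}). -/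

import Mathlib

/-!
On a knot interval `[u, v]` the spline is a cubic, so its slope at either end is the secant
slope corrected by `(v - u) / 6` times a combination of the second derivatives
`M_i = X''(t_i)` at the two ends. Matching the slopes at the interior knots gives a tridiagonal
system for the `M_i`, with `M_0 = M_n = 0`, which is diagonally dominant: at an index where
`|M_i|` is largest it forces `2 (min τ) |M_i| ≤ 24 (max |x|) / min τ`. As `X''` is affine on
each piece, this bounds `X''`; integrating over pieces of length at most `max τ` then bounds
`X'` and `X`.
-/

open Set Finset

/-- `X` is a natural cubic spline through the data `(t_i, x_i)_{i ≤ n}`: it is `C²`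
on `[t 0, t n]`, agrees with a polynomial of degree at most 3 on each `[t i, t (i+1)]`,
interpolates the data, and has vanishing second derivative at the endpoints. -/
def IsNaturalCubicSpline (n : ℕ) (t x : ℕ → ℝ) (X : ℝ → ℝ) : Prop :=
  ContDiffOn ℝ 2 X (Set.Icc (t 0) (t n)) ∧
  (∀ i < n, ∃ p : Polynomial ℝ, p.degree ≤ 3 ∧
    ∀ s ∈ Set.Icc (t i) (t (i + 1)), X s = p.eval s) ∧
  (∀ i ≤ n, X (t i) = x i) ∧
  iteratedDerivWithin 2 X (Set.Icc (t 0) (t n)) (t 0) = 0 ∧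
  iteratedDerivWithin 2 X (Set.Icc (t 0) (t n)) (t n) = 0

open Polynomial

namespace Polynomial

variable {p : ℝ[X]}

theorem eval_eq_of_natDegree_le_three (hp : p.natDegree ≤ 3) (s : ℝ) :
    p.eval s = p.coeff 0 + p.coeff 1 * s + p.coeff 2 * s ^ 2 + p.coeff 3 * s ^ 3 := by
  rw [eval_eq_sum_range' (Nat.lt_succ_of_le hp)]
  simp [Finset.sum_range_succ]

theorem eval_derivative_eq_of_natDegree_le_three (hp : p.natDegree ≤ 3) (s : ℝ) :
    p.derivative.eval s = p.coeff 1 + 2 * p.coeff 2 * s + 3 * p.coeff 3 * s ^ 2 := by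
  have : p.derivative.natDegree < 3 := p.natDegree_derivative_le.trans_lt (by omega)
  rw [eval_eq_sum_range' this]
  simp [Finset.sum_range_succ, coeff_derivative]
  ring

theorem eval_derivative_derivative_eq_of_natDegree_le_three (hp : p.natDegree ≤ 3) (s : ℝ) :
    p.derivative.derivative.eval s = 2 * p.coeff 2 + 6 * p.coeff 3 * s := by
  have : p.derivative.derivative.natDegree < 2 := by
    have := p.derivative.natDegree_derivative_le
    have := p.natDegree_derivative_le
    omega
  rw [eval_eq_sum_range' this]
  simp [Finset.sum_range_succ, coeff_derivative]
  ring

theorem eval_derivative_right_of_natDegree_le_three (hp : p.natDegree ≤ 3) {u v : ℝ}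
    (huv : u ≠ v) :
    p.derivative.eval v = (p.eval v - p.eval u) / (v - u)
      + (v - u) * (2 * p.derivative.derivative.eval v + p.derivative.derivative.eval u) / 6 := by
  have : v - u ≠ 0 := sub_ne_zero.2 huv.symm
  simp only [eval_eq_of_natDegree_le_three hp, eval_derivative_eq_of_natDegree_le_three hp,
    eval_derivative_derivative_eq_of_natDegree_le_three hp]
  field_simp
  ring

theorem eval_derivative_left_of_natDegree_le_three (hp : p.natDegree ≤ 3) {u v : ℝ}
    (huv : u ≠ v) :
    p.derivative.eval u = (p.eval v - p.eval u) / (v - u)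
      - (v - u) * (2 * p.derivative.derivative.eval u + p.derivative.derivative.eval v) / 6 := by
  have : v - u ≠ 0 := sub_ne_zero.2 huv.symm
  simp only [eval_eq_of_natDegree_le_three hp, eval_derivative_eq_of_natDegree_le_three hp,
    eval_derivative_derivative_eq_of_natDegree_le_three hp]
  field_simp
  ring

theorem abs_eval_le_of_natDegree_le_one (hp : p.natDegree ≤ 1) {u v s K : ℝ}
    (hs : s ∈ Icc u v) (hu : |p.eval u| ≤ K) (hv : |p.eval v| ≤ K) : |p.eval s| ≤ K := by
  obtain ⟨a, b, rfl⟩ := exists_eq_X_add_C_of_natDegree_le_one hp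
  simp only [eval_add, eval_mul, eval_C, eval_X, abs_le] at hu hv ⊢
  obtain ⟨hsu, hsv⟩ := hs
  rcases le_total 0 a with ha | ha <;> constructor <;> nlinarith

theorem abs_eval_sub_le_of_abs_eval_derivative_le {u v s B : ℝ} (hs : s ∈ Icc u v)
    (hB : ∀ c ∈ Icc u v, |p.derivative.eval c| ≤ B) :
    |p.eval s - p.eval u| ≤ B * (v - u) := by
  have hu : u ∈ Icc u v := left_mem_Icc.2 (hs.1.trans hs.2)
  have hmvt := (convex_Icc u v).norm_image_sub_le_of_norm_hasDerivWithin_le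
    (fun c _ => (p.hasDerivAt c).hasDerivWithinAt) hB hu hs
  simp only [Real.norm_eq_abs, abs_of_nonneg (sub_nonneg.2 hs.1)] at hmvt
  exact hmvt.trans (mul_le_mul_of_nonneg_left (by linarith [hs.2]) ((abs_nonneg _).trans (hB u hu)))

end Polynomial

theorem derivWithin_eqOn_of_eqOn_Icc {f : ℝ → ℝ} {S : Set ℝ} {p : ℝ[X]} {u v : ℝ}
    (hf : DifferentiableOn ℝ f S) (huv : u < v) (hsub : Icc u v ⊆ S)
    (hfp : EqOn f p.eval (Icc u v)) : EqOn (derivWithin f S) p.derivative.eval (Icc u v) := by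
  intro s hs
  rw [← derivWithin_subset hsub (uniqueDiffOn_Icc huv s hs) (hf s (hsub hs)),
    derivWithin_congr hfp (hfp hs)]
  exact (p.hasDerivAt s).hasDerivWithinAt.derivWithin (uniqueDiffOn_Icc huv s hs)

theorem iteratedDerivWithin_two_eqOn_of_eqOn_Icc {f : ℝ → ℝ} {S : Set ℝ} {p : ℝ[X]}
    {u v : ℝ} (hS : UniqueDiffOn ℝ S) (hf : ContDiffOn ℝ 2 f S) (huv : u < v)
    (hsub : Icc u v ⊆ S) (hfp : EqOn f p.eval (Icc u v)) :
    EqOn (iteratedDerivWithin 2 f S) p.derivative.derivative.eval (Icc u v) := by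
  rw [iteratedDerivWithin_succ', iteratedDerivWithin_one]
  exact derivWithin_eqOn_of_eqOn_Icc
    ((hf.derivWithin hS (by norm_num)).differentiableOn one_ne_zero) huv hsub
    (derivWithin_eqOn_of_eqOn_Icc (hf.differentiableOn two_ne_zero) huv hsub hfp)

theorem mul_abs_le_abs_tridiagonal {a b p q c : ℝ} (ha : 0 ≤ a) (hb : 0 ≤ b)
    (hp : |p| ≤ |c|) (hq : |q| ≤ |c|) :
    (a + b) * |c| ≤ |a * (p + 2 * c) + b * (2 * c + q)| := by
  rw [abs_le] at hp hq
  rcases le_total 0 c with hc | hc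
  · rw [abs_of_nonneg hc] at hp hq ⊢
    refine le_abs.2 (Or.inl ?_)
    nlinarith
  · rw [abs_of_nonpos hc] at hp hq ⊢
    refine le_abs.2 (Or.inr ?_)
    nlinarith

theorem mul_abs_le_of_tridiagonal {n : ℕ} {M τ : ℕ → ℝ} {m R : ℝ} (hm : 0 ≤ m)
    (hτ : ∀ i < n, m ≤ τ i) (hM0 : M 0 = 0) (hMn : M n = 0) (hR : 0 ≤ R)
    (hsys : ∀ i, i + 1 < n →
      |τ i * (M i + 2 * M (i + 1)) + τ (i + 1) * (2 * M (i + 1) + M (i + 2))| ≤ R) :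
    ∀ i ≤ n, 2 * m * |M i| ≤ R := by
  obtain ⟨j, hj, hmax⟩ :=
    (range (n + 1)).exists_max_image (fun i => |M i|) nonempty_range_add_one
  have hmax' : ∀ i ≤ n, |M i| ≤ |M j| := fun i hi => hmax i (mem_range.2 (by omega))
  suffices 2 * m * |M j| ≤ R from fun i hi =>
    (mul_le_mul_of_nonneg_left (hmax' i hi) (by positivity)).trans this
  rw [Finset.mem_range] at hj
  rcases j with _ | k
  · simpa [hM0] using hR
  rcases (Nat.lt_succ_iff.1 hj).eq_or_lt with hkn | hkn
  · simpa [hkn, hMn] using hR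
  calc 2 * m * |M (k + 1)| ≤ (τ k + τ (k + 1)) * |M (k + 1)| := by
        gcongr; linarith [hτ k (by omega), hτ (k + 1) hkn]
    _ ≤ |τ k * (M k + 2 * M (k + 1)) + τ (k + 1) * (2 * M (k + 1) + M (k + 2))| :=
        mul_abs_le_abs_tridiagonal (hm.trans (hτ k (by omega))) (hm.trans (hτ (k + 1) hkn))
          (hmax' k (by omega)) (hmax' (k + 2) hkn)
    _ ≤ R := hsys k hkn

theorem abs_sub_div_le {a b τ m ξ : ℝ} (hm : 0 < m) (hτ : m ≤ τ) (ha : |a| ≤ ξ)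
    (hb : |b| ≤ ξ) :
    |(b - a) / τ| ≤ 2 * ξ / m := by
  rw [abs_div, abs_of_pos (hm.trans_le hτ)]
  exact div_le_div₀ (by linarith [abs_nonneg a]) ((abs_sub _ _).trans (by linarith)) hm hτ

theorem Icc_knots_subset {n : ℕ} {t : ℕ → ℝ} (ht : ∀ i < n, t i < t (i + 1)) {i : ℕ}
    (hi : i < n) : Icc (t i) (t (i + 1)) ⊆ Icc (t 0) (t n) := by
  have hmono := (strictMonoOn_Iic_of_lt_succ (ψ := t) (n := n)
    fun j hj => by simpa using ht j hj).monotoneOn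
  exact Icc_subset_Icc (hmono (by simp) (by simp; omega) (Nat.zero_le i))
    (hmono (by simp; omega) (by simp) hi)

theorem exists_mem_Icc_knots {n : ℕ} {t : ℕ → ℝ} (hn : 1 ≤ n) {s : ℝ}
    (hs : s ∈ Icc (t 0) (t n)) : ∃ i < n, s ∈ Icc (t i) (t (i + 1)) := by
  induction n with
  | zero => omega
  | succ k ih =>
    by_cases hsk : 1 ≤ k ∧ s ≤ t k
    · obtain ⟨i, hi, hsi⟩ := ih hsk.1 ⟨hs.1, hsk.2⟩
      exact ⟨i, by omega, hsi⟩
    · refine ⟨k, by omega, ?_, hs.2⟩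
      rcases Nat.eq_zero_or_pos k with rfl | hk
      · exact hs.1
      · exact (not_le.1 fun h => hsk ⟨hk, h⟩).le

namespace IsNaturalCubicSpline

variable {n : ℕ} {t x : ℕ → ℝ} {X : ℝ → ℝ}

theorem exists_piece (hX : IsNaturalCubicSpline n t x X) (ht : ∀ i < n, t i < t (i + 1))
    {i : ℕ} (hi : i < n) :
    ∃ p : ℝ[X], p.natDegree ≤ 3 ∧ EqOn X p.eval (Icc (t i) (t (i + 1))) ∧
      EqOn (derivWithin X (Icc (t 0) (t n))) p.derivative.eval (Icc (t i) (t (i + 1))) ∧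
      EqOn (iteratedDerivWithin 2 X (Icc (t 0) (t n))) p.derivative.derivative.eval
        (Icc (t i) (t (i + 1))) := by
  obtain ⟨p, hp, hXp⟩ := hX.2.1 i hi
  have hsub := Icc_knots_subset ht hi
  have h0n : t 0 < t n := ((hsub (Set.left_mem_Icc.2 (ht i hi).le)).1.trans_lt (ht i hi)).trans_le
    (hsub (Set.right_mem_Icc.2 (ht i hi).le)).2
  exact ⟨p, natDegree_le_iff_degree_le.2 hp, hXp,
    derivWithin_eqOn_of_eqOn_Icc (hX.1.differentiableOn two_ne_zero) (ht i hi) hsub hXp,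
    iteratedDerivWithin_two_eqOn_of_eqOn_Icc (uniqueDiffOn_Icc h0n) hX.1 (ht i hi) hsub hXp⟩

theorem derivWithin_knot_succ (hX : IsNaturalCubicSpline n t x X)
    (ht : ∀ i < n, t i < t (i + 1)) {i : ℕ} (hi : i < n) :
    derivWithin X (Icc (t 0) (t n)) (t (i + 1))
      = (x (i + 1) - x i) / (t (i + 1) - t i)
        + (t (i + 1) - t i) * (2 * iteratedDerivWithin 2 X (Icc (t 0) (t n)) (t (i + 1))
          + iteratedDerivWithin 2 X (Icc (t 0) (t n)) (t i)) / 6 := by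
  obtain ⟨p, hp, hXp, hX'p, hX''p⟩ := hX.exists_piece ht hi
  have hl := Set.left_mem_Icc.2 (ht i hi).le
  have hr := Set.right_mem_Icc.2 (ht i hi).le
  rw [hX'p hr, hX''p hr, hX''p hl, ← hX.2.2.1 i hi.le, ← hX.2.2.1 (i + 1) hi, hXp hl, hXp hr]
  exact eval_derivative_right_of_natDegree_le_three hp (ht i hi).ne

theorem derivWithin_knot (hX : IsNaturalCubicSpline n t x X)
    (ht : ∀ i < n, t i < t (i + 1)) {i : ℕ} (hi : i < n) :
    derivWithin X (Icc (t 0) (t n)) (t i)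
      = (x (i + 1) - x i) / (t (i + 1) - t i)
        - (t (i + 1) - t i) * (2 * iteratedDerivWithin 2 X (Icc (t 0) (t n)) (t i)
          + iteratedDerivWithin 2 X (Icc (t 0) (t n)) (t (i + 1))) / 6 := by
  obtain ⟨p, hp, hXp, hX'p, hX''p⟩ := hX.exists_piece ht hi
  have hl := Set.left_mem_Icc.2 (ht i hi).le
  have hr := Set.right_mem_Icc.2 (ht i hi).le
  rw [hX'p hl, hX''p hr, hX''p hl, ← hX.2.2.1 i hi.le, ← hX.2.2.1 (i + 1) hi, hXp hl, hXp hr]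
  exact eval_derivative_left_of_natDegree_le_three hp (ht i hi).ne

theorem tridiagonal_eq (hX : IsNaturalCubicSpline n t x X) (ht : ∀ i < n, t i < t (i + 1))
    {i : ℕ} (hi : i + 1 < n) :
    (t (i + 1) - t i) * (iteratedDerivWithin 2 X (Icc (t 0) (t n)) (t i)
        + 2 * iteratedDerivWithin 2 X (Icc (t 0) (t n)) (t (i + 1)))
      + (t (i + 2) - t (i + 1)) * (2 * iteratedDerivWithin 2 X (Icc (t 0) (t n)) (t (i + 1))
        + iteratedDerivWithin 2 X (Icc (t 0) (t n)) (t (i + 2)))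
      = 6 * ((x (i + 2) - x (i + 1)) / (t (i + 2) - t (i + 1))
        - (x (i + 1) - x i) / (t (i + 1) - t i)) := by
  have hleft := hX.derivWithin_knot_succ ht (i := i) (by omega)
  have hright := hX.derivWithin_knot ht hi
  linarith

theorem abs_iteratedDerivWithin_two_knot_le (hX : IsNaturalCubicSpline n t x X)
    (ht : ∀ i < n, t i < t (i + 1)) {m ξ : ℝ} (hm : 0 < m)
    (hτ : ∀ i < n, m ≤ t (i + 1) - t i) (hx : ∀ i ≤ n, |x i| ≤ ξ) {i : ℕ}
    (hi : i ≤ n) :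
    |iteratedDerivWithin 2 X (Icc (t 0) (t n)) (t i)| ≤ 12 * ξ / m ^ 2 := by
  have hslope : ∀ j < n, |(x (j + 1) - x j) / (t (j + 1) - t j)| ≤ 2 * ξ / m := fun j hj =>
    abs_sub_div_le hm (hτ j hj) (hx j hj.le) (hx (j + 1) hj)
  have hξ : 0 ≤ ξ := (abs_nonneg _).trans (hx 0 (Nat.zero_le n))
  have hsys : ∀ j, j + 1 < n →
      |(t (j + 1) - t j) * (iteratedDerivWithin 2 X (Icc (t 0) (t n)) (t j)
        + 2 * iteratedDerivWithin 2 X (Icc (t 0) (t n)) (t (j + 1)))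
      + (t (j + 2) - t (j + 1)) * (2 * iteratedDerivWithin 2 X (Icc (t 0) (t n)) (t (j + 1))
        + iteratedDerivWithin 2 X (Icc (t 0) (t n)) (t (j + 2)))| ≤ 24 * ξ / m := fun j hj => by
    rw [hX.tridiagonal_eq ht hj, abs_mul, abs_of_pos (by norm_num : (0 : ℝ) < 6)]
    have : |(x (j + 2) - x (j + 1)) / (t (j + 2) - t (j + 1))
        - (x (j + 1) - x j) / (t (j + 1) - t j)| ≤ 2 * ξ / m + 2 * ξ / m :=
      (abs_sub _ _).trans (add_le_add (hslope (j + 1) hj) (hslope j (by omega)))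
    linarith [show 24 * ξ / m = 6 * (2 * ξ / m + 2 * ξ / m) by ring]
  have hmain := mul_abs_le_of_tridiagonal hm.le hτ hX.2.2.2.1 hX.2.2.2.2 (by positivity) hsys i hi
  rw [le_div_iff₀ (by positivity)]
  rw [le_div_iff₀ hm] at hmain
  nlinarith

theorem abs_iteratedDerivWithin_two_le_of_mem_Icc (hX : IsNaturalCubicSpline n t x X)
    (ht : ∀ i < n, t i < t (i + 1)) {i : ℕ} (hi : i < n) {K s : ℝ}
    (hKi : |iteratedDerivWithin 2 X (Icc (t 0) (t n)) (t i)| ≤ K)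
    (hKi' : |iteratedDerivWithin 2 X (Icc (t 0) (t n)) (t (i + 1))| ≤ K)
    (hs : s ∈ Icc (t i) (t (i + 1))) :
    |iteratedDerivWithin 2 X (Icc (t 0) (t n)) s| ≤ K := by
  obtain ⟨p, hp, -, -, hX''p⟩ := hX.exists_piece ht hi
  rw [hX''p (Set.left_mem_Icc.2 (ht i hi).le)] at hKi
  rw [hX''p (Set.right_mem_Icc.2 (ht i hi).le)] at hKi'
  rw [hX''p hs]
  refine abs_eval_le_of_natDegree_le_one ?_ hs hKi hKi'
  have := p.derivative.natDegree_derivative_le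
  have := p.natDegree_derivative_le
  omega

theorem abs_derivWithin_sub_le_of_mem_Icc (hX : IsNaturalCubicSpline n t x X)
    (ht : ∀ i < n, t i < t (i + 1)) {i : ℕ} (hi : i < n) {K s : ℝ}
    (hK : ∀ c ∈ Icc (t i) (t (i + 1)), |iteratedDerivWithin 2 X (Icc (t 0) (t n)) c| ≤ K)
    (hs : s ∈ Icc (t i) (t (i + 1))) :
    |derivWithin X (Icc (t 0) (t n)) s - derivWithin X (Icc (t 0) (t n)) (t i)|
      ≤ K * (t (i + 1) - t i) := by
  obtain ⟨p, -, -, hX'p, hX''p⟩ := hX.exists_piece ht hi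
  rw [hX'p hs, hX'p (Set.left_mem_Icc.2 (ht i hi).le)]
  exact abs_eval_sub_le_of_abs_eval_derivative_le hs fun c hc => by
    simpa only [hX''p hc] using hK c hc

theorem abs_sub_le_of_mem_Icc (hX : IsNaturalCubicSpline n t x X)
    (ht : ∀ i < n, t i < t (i + 1)) {i : ℕ} (hi : i < n) {B s : ℝ}
    (hB : ∀ c ∈ Icc (t i) (t (i + 1)), |derivWithin X (Icc (t 0) (t n)) c| ≤ B)
    (hs : s ∈ Icc (t i) (t (i + 1))) :
    |X s - x i| ≤ B * (t (i + 1) - t i) := by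
  obtain ⟨p, -, hXp, hX'p, -⟩ := hX.exists_piece ht hi
  rw [← hX.2.2.1 i hi.le, hXp hs, hXp (Set.left_mem_Icc.2 (ht i hi).le)]
  exact abs_eval_sub_le_of_abs_eval_derivative_le hs fun c hc => by
    simpa only [hX'p hc] using hB c hc

theorem abs_iteratedDerivWithin_two_le (hX : IsNaturalCubicSpline n t x X)
    (ht : ∀ i < n, t i < t (i + 1)) (hn : 1 ≤ n) {m ξ : ℝ} (hm : 0 < m)
    (hτ : ∀ i < n, m ≤ t (i + 1) - t i) (hx : ∀ i ≤ n, |x i| ≤ ξ) {s : ℝ}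
    (hs : s ∈ Icc (t 0) (t n)) :
    |iteratedDerivWithin 2 X (Icc (t 0) (t n)) s| ≤ 12 * ξ / m ^ 2 := by
  obtain ⟨i, hi, hsi⟩ := exists_mem_Icc_knots hn hs
  exact hX.abs_iteratedDerivWithin_two_le_of_mem_Icc ht hi
    (hX.abs_iteratedDerivWithin_two_knot_le ht hm hτ hx hi.le)
    (hX.abs_iteratedDerivWithin_two_knot_le ht hm hτ hx hi) hsi

theorem abs_derivWithin_le (hX : IsNaturalCubicSpline n t x X)
    (ht : ∀ i < n, t i < t (i + 1)) (hn : 1 ≤ n) {m A ξ : ℝ} (hm : 0 < m)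
    (hτm : ∀ i < n, m ≤ t (i + 1) - t i) (hτA : ∀ i < n, t (i + 1) - t i ≤ A)
    (hx : ∀ i ≤ n, |x i| ≤ ξ) {s : ℝ} (hs : s ∈ Icc (t 0) (t n)) :
    |derivWithin X (Icc (t 0) (t n)) s| ≤ 2 * ξ / m + 18 * A * ξ / m ^ 2 := by
  obtain ⟨i, hi, hsi⟩ := exists_mem_Icc_knots hn hs
  have hK : ∀ j ≤ n, _ := fun j hj => hX.abs_iteratedDerivWithin_two_knot_le ht hm hτm hx hj
  have hτ := sub_pos.2 (ht i hi)
  have hknot : |derivWithin X (Icc (t 0) (t n)) (t i)|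
      ≤ 2 * ξ / m + (t (i + 1) - t i) * (3 * (12 * ξ / m ^ 2)) / 6 := by
    rw [hX.derivWithin_knot ht hi]
    refine (abs_sub _ _).trans (add_le_add (abs_sub_div_le hm (hτm i hi) (hx i hi.le)
      (hx (i + 1) hi)) ?_)
    rw [abs_div, abs_mul, abs_of_pos hτ, abs_of_pos (by norm_num : (0 : ℝ) < 6)]
    gcongr
    refine (abs_add_le _ _).trans ?_
    rw [abs_mul, abs_two]
    linarith [hK i hi.le, hK (i + 1) hi]
  have hincr := hX.abs_derivWithin_sub_le_of_mem_Icc ht hi (fun c hc =>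
    hX.abs_iteratedDerivWithin_two_le ht hn hm hτm hx (Icc_knots_subset ht hi hc)) hsi
  have hA := hτA i hi
  have hK0 : 0 ≤ 12 * ξ / m ^ 2 := (abs_nonneg _).trans (hK 0 (Nat.zero_le n))
  have htri := abs_sub_abs_le_abs_sub (derivWithin X (Icc (t 0) (t n)) s)
    (derivWithin X (Icc (t 0) (t n)) (t i))
  have h18 : 18 * A * ξ / m ^ 2 = 3 / 2 * A * (12 * ξ / m ^ 2) := by ring
  nlinarith

theorem abs_le (hX : IsNaturalCubicSpline n t x X)
    (ht : ∀ i < n, t i < t (i + 1)) (hn : 1 ≤ n) {m A ξ : ℝ} (hm : 0 < m)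
    (hτm : ∀ i < n, m ≤ t (i + 1) - t i) (hτA : ∀ i < n, t (i + 1) - t i ≤ A)
    (hx : ∀ i ≤ n, |x i| ≤ ξ) {s : ℝ} (hs : s ∈ Icc (t 0) (t n)) :
    |X s| ≤ ξ + A * (2 * ξ / m + 18 * A * ξ / m ^ 2) := by
  obtain ⟨i, hi, hsi⟩ := exists_mem_Icc_knots hn hs
  have hB := fun c (hc : c ∈ Icc (t i) (t (i + 1))) =>
    hX.abs_derivWithin_le ht hn hm hτm hτA hx (Icc_knots_subset ht hi hc)
  have hincr := hX.abs_sub_le_of_mem_Icc ht hi hB hsi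
  have hB0 := (abs_nonneg _).trans (hB _ hsi)
  have htri := abs_sub_abs_le_abs_sub (X s) (x i)
  nlinarith [hx i hi.le, hτA i hi]

end IsNaturalCubicSpline

theorem add_spline_bounds_le {m A ξ : ℝ} (hm : 0 < m) (hmA : m ≤ A) (hξ : 0 ≤ ξ) :
    ξ + A * (2 * ξ / m + 18 * A * ξ / m ^ 2) + (2 * ξ / m + 18 * A * ξ / m ^ 2)
        + 12 * ξ / m ^ 2
      ≤ 53 * A * ξ * (m⁻¹) ^ 2 * (A + m⁻¹) := by
  set u := m⁻¹ with hu_def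
  have hu : 0 < u := inv_pos.2 hm
  have hAu : 1 ≤ A * u := by
    rw [hu_def, ← mul_inv_cancel₀ hm.ne']
    exact mul_le_mul_of_nonneg_right hmA hu.le
  have hA : 0 < A := hm.trans_le hmA
  have key : 1 + 2 * (A * u) + 18 * (A * u) ^ 2 + 2 * u + 18 * A * u ^ 2 + 12 * u ^ 2
      ≤ 53 * (A * u ^ 2 * (A + u)) := by
    have h1 : 1 ≤ (A * u) ^ 2 := by nlinarith
    have h2 : A * u ≤ (A * u) ^ 2 := by nlinarith
    have h3 : u ^ 2 ≤ A * u ^ 3 := by nlinarith [sq_nonneg u]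
    have h4 : u ≤ (A * u) ^ 2 + A * u ^ 3 := by
      rcases le_total 1 u with h | h <;> nlinarith
    have h5 : A * u ^ 2 ≤ (A * u) ^ 2 + A * u ^ 3 := by
      rcases le_total 1 u with h | h <;> nlinarith [mul_pos hA hu]
    nlinarith
  calc _ = ξ * (1 + 2 * (A * u) + 18 * (A * u) ^ 2 + 2 * u + 18 * A * u ^ 2 + 12 * u ^ 2) := by
        rw [hu_def]; field_simp; ring
    _ ≤ ξ * (53 * (A * u ^ 2 * (A + u))) := mul_le_mul_of_nonneg_left key hξ
    _ = _ := by ring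

/-- A natural cubic spline and its first two derivatives are controlled, with an
absolute constant, by the sizes of the data and the knot spacings:
`‖X‖_∞ + ‖X'‖_∞ + ‖X''‖_∞ ≤ C ‖τ‖_∞ ‖x‖_∞ (min τ)⁻² (‖τ‖_∞ + (min τ)⁻¹)`. -/
theorem stmt_7 :
    ∃ C : ℝ, 0 < C ∧
      ∀ (n : ℕ) (hn : 1 ≤ n) (t x : ℕ → ℝ), (∀ i < n, t i < t (i + 1)) →
        ∀ X : ℝ → ℝ, IsNaturalCubicSpline n t x X →
          (⨆ s : Set.Icc (t 0) (t n), |X s|)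
          + (⨆ s : Set.Icc (t 0) (t n), |derivWithin X (Set.Icc (t 0) (t n)) s|)
          + (⨆ s : Set.Icc (t 0) (t n), |iteratedDerivWithin 2 X (Set.Icc (t 0) (t n)) s|)
          ≤ C * ((Finset.range n).sup' ⟨0, Finset.mem_range.mpr hn⟩ (fun i => t (i + 1) - t i))
              * ((Finset.range (n + 1)).sup' ⟨0, Finset.mem_range.mpr (Nat.succ_pos n)⟩
                  (fun i => |x i|))
              * (((Finset.range n).inf' ⟨0, Finset.mem_range.mpr hn⟩
                  (fun i => t (i + 1) - t i))⁻¹) ^ 2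
              * (((Finset.range n).sup' ⟨0, Finset.mem_range.mpr hn⟩ (fun i => t (i + 1) - t i))
                + (((Finset.range n).inf' ⟨0, Finset.mem_range.mpr hn⟩
                    (fun i => t (i + 1) - t i))⁻¹)) := by
  refine ⟨53, by norm_num, fun n hn t x ht X hX => ?_⟩
  set A := (range n).sup' ⟨0, mem_range.2 hn⟩ fun i => t (i + 1) - t i
  set m := (range n).inf' ⟨0, mem_range.2 hn⟩ fun i => t (i + 1) - t i
  set ξ := (range (n + 1)).sup' ⟨0, mem_range.2 (Nat.succ_pos n)⟩ fun i => |x i|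
  have hτA : ∀ i < n, t (i + 1) - t i ≤ A := fun i hi =>
    le_sup' (fun i => t (i + 1) - t i) (mem_range.2 hi)
  have hτm : ∀ i < n, m ≤ t (i + 1) - t i := fun i hi =>
    inf'_le (fun i => t (i + 1) - t i) (mem_range.2 hi)
  have hm : 0 < m := (lt_inf'_iff _).2 fun i hi => sub_pos.2 (ht i (mem_range.1 hi))
  have hx : ∀ i ≤ n, |x i| ≤ ξ := fun i hi =>
    le_sup' (fun i => |x i|) (mem_range.2 (by omega))
  have : Nonempty (Icc (t 0) (t n)) :=
    ⟨t 0, Icc_knots_subset ht hn (Set.left_mem_Icc.2 (ht 0 hn).le)⟩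
  calc _ ≤ ξ + A * (2 * ξ / m + 18 * A * ξ / m ^ 2) + (2 * ξ / m + 18 * A * ξ / m ^ 2)
        + 12 * ξ / m ^ 2 :=
      add_le_add (add_le_add (ciSup_le fun s => hX.abs_le ht hn hm hτm hτA hx s.2)
        (ciSup_le fun s => hX.abs_derivWithin_le ht hn hm hτm hτA hx s.2))
        (ciSup_le fun s => hX.abs_iteratedDerivWithin_two_le ht hn hm hτm hx s.2)
    _ ≤ _ := add_spline_bounds_le hm ((hτm 0 hn).trans (hτA 0 hn))
        ((abs_nonneg _).trans (hx 0 (Nat.zero_le n)))
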